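/- A is T-EP if and only if A* is T*-EP, if and only if A† is T*-EP. -/

import Mathlib

open Matrix

/-- The four Penrose conditions: `X` is the Moore-Penrose inverse of `A`. -/
def IsMP {m n : ℕ} (A : Matrix (Fin m) (Fin n) ℂ) (X : Matrix (Fin n) (Fin m) ℂ) : Prop :=
  A * X * A = A ∧ X * A * X = X ∧ (A * X)ᴴ = A * X ∧ (X * A)ᴴ = X * A

/-- `A` is T-EP: range(A) = range(T Aᴴ T) and A = A Tᴴ T. -/
def IsTEP {m n : ℕ} (T A : Matrix (Fin m) (Fin n) ℂ) : Prop :=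
  LinearMap.range (Matrix.mulVecLin A) = LinearMap.range (Matrix.mulVecLin (T * Aᴴ * T)) ∧
    A = A * Tᴴ * T

/-!
For a partial isometry `T`, being `T`-EP depends only on the ranges of `A` and `Aᴴ`: it means
`R(A) ⊆ R(T)`, `R(Aᴴ) ⊆ R(Tᴴ)` and `R(A) = R(T Aᴴ)`. Since `T Tᴴ` is the identity on `R(T)`,
`Tᴴ` is injective there, so the last condition is equivalent to `R(Aᴴ) = R(Tᴴ A)`, the same
condition for the pair `(Tᴴ, Aᴴ)`. The Moore-Penrose inverse satisfies `R(A†ᴴ) = R(A)` and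
`R(A†) = R(Aᴴ)`, so `A†ᴴ` is `T`-EP exactly when `A` is, and the first equivalence turns this
into `A†` being `Tᴴ`-EP.
-/

section RangeFactorization

variable {R : Type*} [CommSemiring R] {l m n : Type*} [Fintype m] [Fintype n]

lemma range_mulVecLin_mul (A : Matrix l m R) (B : Matrix m n R) :
    (A * B).mulVecLin.range = B.mulVecLin.range.map A.mulVecLin := by
  rw [mulVecLin_mul, LinearMap.range_comp]

lemma range_mulVecLin_mul_le (A : Matrix l m R) (B : Matrix m n R) :
    (A * B).mulVecLin.range ≤ A.mulVecLin.range := by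
  rw [mulVecLin_mul]
  exact LinearMap.range_comp_le_range _ _

lemma range_mulVecLin_le_iff_exists_eq_mul [DecidableEq n] {A : Matrix l n R}
    {B : Matrix l m R} :
    A.mulVecLin.range ≤ B.mulVecLin.range ↔ ∃ C : Matrix m n R, A = B * C := by
  constructor
  · intro h
    choose w hw using fun j => h ⟨Pi.single j 1, rfl⟩
    refine ⟨Matrix.of fun i j => w j i, ?_⟩
    ext i j
    have hcol := congr_fun (hw j) i
    simp only [mulVecLin_apply, mulVec_single_one] at hcol
    simpa [Matrix.mul_apply, mulVec, dotProduct] using hcol.symm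
  · rintro ⟨C, rfl⟩
    exact range_mulVecLin_mul_le B C

lemma range_mulVecLin_mul_eq_of_mul_mul_eq {A : Matrix l m R} {B : Matrix m n R}
    {C : Matrix n m R} (h : A * B * C = A) :
    (A * B).mulVecLin.range = A.mulVecLin.range :=
  le_antisymm (range_mulVecLin_mul_le A B)
    (by simpa only [h] using range_mulVecLin_mul_le (A * B) C)

lemma mul_mul_eq_self_iff_range_mulVecLin_le [Fintype l] [DecidableEq n] {T : Matrix l m R}
    {S : Matrix m l R} {A : Matrix l n R} (hT : T * S * T = T) :
    T * S * A = A ↔ A.mulVecLin.range ≤ T.mulVecLin.range := by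
  constructor
  · intro h
    rw [← h, Matrix.mul_assoc]
    exact range_mulVecLin_mul_le _ _
  · intro h
    obtain ⟨C, rfl⟩ := range_mulVecLin_le_iff_exists_eq_mul.1 h
    rw [← Matrix.mul_assoc, hT]

lemma range_mulVecLin_mul_eq_iff {p : Type*} [Fintype l] [Fintype p] {T : Matrix l m R}
    {S : Matrix m l R} {X : Matrix l n R} {Y : Matrix l p R} (hX : T * S * X = X)
    (hY : T * S * Y = Y) :
    (S * X).mulVecLin.range = (S * Y).mulVecLin.range ↔
      X.mulVecLin.range = Y.mulVecLin.range := by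
  constructor
  · intro h
    rw [← hX, ← hY, Matrix.mul_assoc, Matrix.mul_assoc, range_mulVecLin_mul T,
      range_mulVecLin_mul T, h]
  · intro h
    rw [range_mulVecLin_mul, range_mulVecLin_mul, h]

end RangeFactorization

section PartialIsometry

variable {R : Type*} [CommSemiring R] [StarRing R] {m n : Type*} [Fintype m] [Fintype n]

def IsPartialIsometry (T : Matrix m n R) : Prop :=
  T * Tᴴ * T = T

namespace IsPartialIsometry

variable {T : Matrix m n R}

lemma conjTranspose_mul_self_mul (hT : IsPartialIsometry T) : Tᴴ * T * Tᴴ = Tᴴ := by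
  simpa only [conjTranspose_mul, conjTranspose_conjTranspose, Matrix.mul_assoc]
    using congrArg conjTranspose hT

lemma conjTranspose (hT : IsPartialIsometry T) : IsPartialIsometry Tᴴ := by
  rw [IsPartialIsometry, conjTranspose_conjTranspose]
  exact hT.conjTranspose_mul_self_mul

lemma mul_conjTranspose_mul_eq_self_iff [DecidableEq m] {A : Matrix m n R}
    (hT : IsPartialIsometry T) :
    A * Tᴴ * T = A ↔ Aᴴ.mulVecLin.range ≤ Tᴴ.mulVecLin.range := by
  rw [← mul_mul_eq_self_iff_range_mulVecLin_le hT.conjTranspose_mul_self_mul, ← conjTranspose_inj]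
  simp only [conjTranspose_mul, conjTranspose_conjTranspose, Matrix.mul_assoc]

lemma range_conjTranspose_eq_iff [DecidableEq m] [DecidableEq n] {A : Matrix m n R}
    (hT : IsPartialIsometry T) (hA : A.mulVecLin.range ≤ T.mulVecLin.range)
    (hA' : Aᴴ.mulVecLin.range ≤ Tᴴ.mulVecLin.range) :
    Aᴴ.mulVecLin.range = (Tᴴ * A).mulVecLin.range ↔
      A.mulVecLin.range = (T * Aᴴ).mulVecLin.range := by
  have hTA : Tᴴ * (T * Aᴴ) = Aᴴ := by
    rw [← Matrix.mul_assoc]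
    exact (mul_mul_eq_self_iff_range_mulVecLin_le hT.conjTranspose_mul_self_mul).2 hA'
  have hTTA : T * Tᴴ * (T * Aᴴ) = T * Aᴴ := by rw [← Matrix.mul_assoc, hT]
  have key := range_mulVecLin_mul_eq_iff ((mul_mul_eq_self_iff_range_mulVecLin_le hT).2 hA) hTTA
  rw [hTA] at key
  rw [eq_comm, key]

end IsPartialIsometry

end PartialIsometry

section TEP

variable {m n : ℕ}

lemma isTEP_iff {T A : Matrix (Fin m) (Fin n) ℂ} (hT : IsPartialIsometry T) :
    IsTEP T A ↔ A.mulVecLin.range ≤ T.mulVecLin.range ∧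
      Aᴴ.mulVecLin.range ≤ Tᴴ.mulVecLin.range ∧
      A.mulVecLin.range = (T * Aᴴ).mulVecLin.range := by
  have hdrop (hA : A.mulVecLin.range ≤ T.mulVecLin.range) :
      (T * Aᴴ * T).mulVecLin.range = (T * Aᴴ).mulVecLin.range := by
    refine range_mulVecLin_mul_eq_of_mul_mul_eq (C := Tᴴ) ?_
    calc T * Aᴴ * T * Tᴴ = T * (T * Tᴴ * A)ᴴ := by
          simp only [conjTranspose_mul, conjTranspose_conjTranspose, Matrix.mul_assoc]
      _ = T * Aᴴ := by rw [(mul_mul_eq_self_iff_range_mulVecLin_le hT).2 hA]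
  constructor
  · rintro ⟨hrange, hcorner⟩
    have hA : A.mulVecLin.range ≤ T.mulVecLin.range := by
      rw [hrange, Matrix.mul_assoc]
      exact range_mulVecLin_mul_le _ _
    exact ⟨hA, hT.mul_conjTranspose_mul_eq_self_iff.1 hcorner.symm, hrange.trans (hdrop hA)⟩
  · rintro ⟨hA, hA', hrange⟩
    exact ⟨hrange.trans (hdrop hA).symm, (hT.mul_conjTranspose_mul_eq_self_iff.2 hA').symm⟩

lemma isTEP_conjTranspose_iff {T A : Matrix (Fin m) (Fin n) ℂ} (hT : IsPartialIsometry T) :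
    IsTEP Tᴴ Aᴴ ↔ IsTEP T A := by
  rw [isTEP_iff hT, isTEP_iff hT.conjTranspose]
  simp only [conjTranspose_conjTranspose]
  constructor
  · rintro ⟨hA', hA, hrange⟩
    exact ⟨hA, hA', (hT.range_conjTranspose_eq_iff hA hA').1 hrange⟩
  · rintro ⟨hA, hA', hrange⟩
    exact ⟨hA', hA, (hT.range_conjTranspose_eq_iff hA hA').2 hrange⟩

lemma isTEP_congr_range {T A B : Matrix (Fin m) (Fin n) ℂ} (hT : IsPartialIsometry T)
    (h : B.mulVecLin.range = A.mulVecLin.range) (h' : Bᴴ.mulVecLin.range = Aᴴ.mulVecLin.range) :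
    IsTEP T B ↔ IsTEP T A := by
  rw [isTEP_iff hT, isTEP_iff hT, range_mulVecLin_mul T Bᴴ, range_mulVecLin_mul T Aᴴ, h, h']

end TEP

section MoorePenrose

variable {m n : ℕ} {A : Matrix (Fin m) (Fin n) ℂ} {X : Matrix (Fin n) (Fin m) ℂ}

lemma IsMP.conjTranspose (h : IsMP A X) : IsMP Aᴴ Xᴴ := by
  obtain ⟨h1, h2, h3, h4⟩ := h
  refine ⟨?_, ?_, ?_, ?_⟩
  · rw [← conjTranspose_mul, ← conjTranspose_mul, ← Matrix.mul_assoc, h1]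
  · rw [← conjTranspose_mul, ← conjTranspose_mul, ← Matrix.mul_assoc, h2]
  · rw [← conjTranspose_mul, conjTranspose_conjTranspose, h4]
  · rw [← conjTranspose_mul, conjTranspose_conjTranspose, h3]

lemma IsMP.range_conjTranspose (h : IsMP A X) : Xᴴ.mulVecLin.range = A.mulVecLin.range := by
  obtain ⟨h1, h2, h3, -⟩ := h
  have hX : A * X * Xᴴ = Xᴴ := by
    conv_rhs => rw [← h2, Matrix.mul_assoc, conjTranspose_mul, h3]
  have hA : Xᴴ * Aᴴ * A = A := by rw [← conjTranspose_mul, h3, h1]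
  exact le_antisymm
    (by rw [← hX, Matrix.mul_assoc]; exact range_mulVecLin_mul_le _ _)
    (by rw [← hA, Matrix.mul_assoc]; exact range_mulVecLin_mul_le _ _)

end MoorePenrose

theorem stmt12 {m n : ℕ} (A T : Matrix (Fin m) (Fin n) ℂ)
    (Ad : Matrix (Fin n) (Fin m) ℂ) (hT : T = T * Tᴴ * T) (hMP : IsMP A Ad) :
    (IsTEP T A ↔ IsTEP Tᴴ Aᴴ) ∧ (IsTEP T A ↔ IsTEP Tᴴ Ad) := by
  have hPI : IsPartialIsometry T := hT.symm
  have hAd : IsTEP T Adᴴ ↔ IsTEP T A := by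
    refine isTEP_congr_range hPI hMP.range_conjTranspose ?_
    simpa only [conjTranspose_conjTranspose] using hMP.conjTranspose.range_conjTranspose
  refine ⟨(isTEP_conjTranspose_iff hPI).symm, hAd.symm.trans ?_⟩
  simpa only [conjTranspose_conjTranspose] using (isTEP_conjTranspose_iff (A := Adᴴ) hPI).symm
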